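/- arXiv:0712.1903 — 5 statements merged into one kernel-verified Lean document; each statement's English description precedes it below -/
import Mathlib

section
/- Let q ≥ 1, let d = (d_1, …, d_q) be a tuple of nonnegative integers with d_1 + ⋯ + d_q ≥ 1, and let m be a nonnegative integer. Then Z(m,d) := (-1)^m · ∑ (-1)^{l_1+⋯+l_q} C(d_1,l_1)⋯C(d_q,l_q) ≥ 0, where the sum runs over all tuples (l_1,…,l_q) with 0 ≤ l_i ≤ d_i for each i and l_1 + ⋯ + l_q ≤ m. -/
open Finset Polynomial

lemma alt_partial (e : ℕ) : ∀ m : ℕ,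
    ∑ k ∈ Finset.range (m + 1), (-1 : ℤ) ^ k * ((e + 1).choose k : ℤ)
      = (-1) ^ m * (e.choose m : ℤ) := by
  intro m
  induction m with
  | zero => simp
  | succ m ih =>
    rw [Finset.sum_range_succ, ih, Nat.choose_succ_succ]
    push_cast
    ring

lemma vdm (q : ℕ) (d : Fin q → ℕ) (k : ℕ) :
    ∑ l ∈ (Fintype.piFinset fun i => Finset.range (d i + 1)).filter
        (fun l => ∑ i, l i = k),
      ∏ i, ((d i).choose (l i) : ℤ) = ((∑ i, d i).choose k : ℤ) := by
  have h : (∏ i, (X + 1 : ℤ[X]) ^ (d i)) = (X + 1) ^ (∑ i, d i) := by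
    rw [Finset.prod_pow_eq_pow_sum]
  have h2 : ∀ i : Fin q, ((X + 1 : ℤ[X]) ^ (d i)) =
      ∑ j ∈ Finset.range (d i + 1), Polynomial.C ((d i).choose j : ℤ) * X ^ j := by
    intro i
    rw [add_pow]
    apply Finset.sum_congr rfl
    intro j hj
    rw [one_pow, Polynomial.C_eq_natCast]
    push_cast
    ring
  calc ∑ l ∈ (Fintype.piFinset fun i => Finset.range (d i + 1)).filter
        (fun l => ∑ i, l i = k), ∏ i, ((d i).choose (l i) : ℤ)
      = ∑ l ∈ Fintype.piFinset fun i => Finset.range (d i + 1),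
          (∏ i, (Polynomial.C ((d i).choose (l i) : ℤ) * X ^ (l i))).coeff k := by
        rw [Finset.sum_filter]
        apply Finset.sum_congr rfl
        intro l _
        rw [Finset.prod_mul_distrib, ← map_prod, Finset.prod_pow_eq_pow_sum,
          Polynomial.coeff_C_mul, Polynomial.coeff_X_pow]
        by_cases hs : ∑ i, l i = k
        · simp [hs]
        · rw [if_neg hs, if_neg (fun hh => hs hh.symm), mul_zero]
    _ = ((∑ i, d i).choose k : ℤ) := by
        have h3 : (∏ i, ∑ j ∈ Finset.range (d i + 1),
            Polynomial.C ((d i).choose j : ℤ) * X ^ j) = (X + 1) ^ (∑ i, d i) := by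
          simp_rw [← h2]; exact h
        rw [← Polynomial.finset_sum_coeff,
          ← Finset.prod_univ_sum (fun i => Finset.range (d i + 1))
            (fun i j => Polynomial.C ((d i).choose j : ℤ) * X ^ j),
          h3, Polynomial.coeff_X_add_one_pow]

theorem stmt_1 (q : ℕ) (hq : 1 ≤ q) (d : Fin q → ℕ) (hd : 1 ≤ ∑ i, d i) (m : ℕ) :
    0 ≤ (-1 : ℤ) ^ m *
      ∑ l ∈ (Fintype.piFinset fun i => Finset.range (d i + 1)).filter
          (fun l => ∑ i, l i ≤ m),
        (-1 : ℤ) ^ (∑ i, l i) * ∏ i, ((d i).choose (l i) : ℤ) := by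
  obtain ⟨e, he⟩ : ∃ e, ∑ i, d i = e + 1 := ⟨∑ i, d i - 1, by omega⟩
  have key : ∑ l ∈ (Fintype.piFinset fun i => Finset.range (d i + 1)).filter
          (fun l => ∑ i, l i ≤ m),
        (-1 : ℤ) ^ (∑ i, l i) * ∏ i, ((d i).choose (l i) : ℤ)
      = ∑ k ∈ Finset.range (m + 1), (-1 : ℤ) ^ k * ((∑ i, d i).choose k : ℤ) := by
    rw [← Finset.sum_fiberwise_of_maps_to (g := fun l => ∑ i, l i)
      (t := Finset.range (m + 1)) ?_]
    · apply Finset.sum_congr rfl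
      intro k hk
      simp only [Finset.mem_range] at hk
      have hfilter : ((Fintype.piFinset fun i => Finset.range (d i + 1)).filter
          (fun l => ∑ i, l i ≤ m)).filter (fun l => ∑ i, l i = k)
          = (Fintype.piFinset fun i => Finset.range (d i + 1)).filter
          (fun l => ∑ i, l i = k) := by
        rw [Finset.filter_filter]
        apply Finset.filter_congr
        intro l _
        constructor
        · rintro ⟨_, h⟩; exact h
        · intro h; constructor <;> omega
      rw [hfilter, ← vdm q d k, Finset.mul_sum]
      apply Finset.sum_congr rfl
      intro l hl
      simp only [Finset.mem_filter] at hl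
      rw [hl.2]
    · intro l hl
      simp only [Finset.mem_filter] at hl
      simp only [Finset.mem_range]
      omega
  rw [key, he, alt_partial, ← mul_assoc, ← mul_pow]
  simp
end

section
/- Let (Ω, Σ, P) be a probability space, q ≥ 1, and for each i = 1,…,q let (A_{i,j})_{j ∈ I_i} be a finite family of events. Define C_i(ω) = |{j ∈ I_i : ω ∈ A_{i,j}}|, and for k = (k_1,…,k_q) ∈ ℕ^q set S_k = ∑_{J_1 ⊆ I_1, |J_1|=k_1} ⋯ ∑_{J_q ⊆ I_q, |J_q|=k_q} P(⋂_{i=1}^q ⋂_{j ∈ J_i} A_{i,j}), with S_0 = 1. Then for every r = (r_1,…,r_q) ∈ ℕ^q: P(C_1 = r_1, …, C_q = r_q) = ∑_{k_1=r_1}^{|I_1|} ⋯ ∑_{k_q=r_q}^{|I_q|} (-1)^{(k_1-r_1)+⋯+(k_q-r_q)} C(k_1,r_1)⋯C(k_q,r_q) · S_{(k_1,…,k_q)}. -/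
open MeasureTheory Finset
open scoped Classical

/-!
Fix `ω` and let `c i` be the number of events of the `i`-th family that occur at `ω`. The
`k`-subsets `J` with `ω ∈ ⋂ i, ⋂ j ∈ J i, A i j` are the choices of `k i` occurring events in each
family, so their number is `∏ i, (c i).choose (k i)`. Binomial inversion,
`∑ k, (-1) ^ (k - r) * k.choose r * c.choose k = [c = r]`, applied in each coordinate then turns
the right-hand side into the indicator of `{c = r}` pointwise, and integrating against `P` gives
the formula.
-/

theorem sum_Icc_neg_one_pow_mul_choose_mul_choose {R : Type*} [CommRing R] {c n : ℕ} (r : ℕ)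
    (hcn : c ≤ n) :
    ∑ k ∈ Icc r n, (-1 : R) ^ (k - r) * k.choose r * c.choose k = if c = r then 1 else 0 := by
  have htrunc : ∑ k ∈ Icc r n, (-1 : R) ^ (k - r) * k.choose r * c.choose k =
      ∑ k ∈ Ico r (c + 1), (-1 : R) ^ (k - r) * k.choose r * c.choose k := by
    refine (sum_subset (fun k hk => ?_) fun k hk hk' => ?_).symm
    · simp only [mem_Ico, mem_Icc] at hk ⊢; omega
    · simp only [mem_Ico, mem_Icc] at hk hk'
      simp [Nat.choose_eq_zero_of_lt (show c < k by omega)]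
  -- `c.choose k * k.choose r = c.choose r * (c - r).choose (k - r)` leaves an alternating row sum.
  have hfactor : ∀ j, (-1 : R) ^ (r + j - r) * (r + j).choose r * c.choose (r + j) =
      c.choose r * ((-1) ^ j * (c - r).choose j) := by
    intro j
    have := Nat.choose_mul (n := c) (s := r) (Nat.le_add_right r j)
    rw [Nat.add_sub_cancel_left] at this ⊢
    rw [mul_assoc, ← Nat.cast_mul, mul_comm ((r + j).choose r), this]
    push_cast; ring
  have halt : ∑ j ∈ range (c - r + 1), (-1 : R) ^ j * (c - r).choose j =
      if c - r = 0 then 1 else 0 := by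
    exact_mod_cast congrArg (Int.cast : ℤ → R) Int.alternating_sum_range_choose
  rw [htrunc, sum_Ico_eq_sum_range]
  simp only [hfactor, ← mul_sum]
  rcases lt_or_ge c r with hcr | hrc
  · simp [Nat.choose_eq_zero_of_lt hcr, hcr.ne]
  · rw [Nat.sub_add_comm hrc, halt]
    by_cases h : c = r
    · simp [h]
    · simp [h, show c - r ≠ 0 by omega]

section
variable {ι : Type*} [Fintype ι] {I : ι → Type*} [∀ i, Fintype (I i)] {Ω : Type*}
  (A : ∀ i, I i → Set Ω)

theorem measurableSet_setOf_forall_card_eq [MeasurableSpace Ω]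
    (hA : ∀ i j, MeasurableSet (A i j)) (r : ι → ℕ) :
    MeasurableSet {ω | ∀ i, #{j | ω ∈ A i j} = r i} := by
  have hcard : ∀ i, Measurable fun ω => #{j | ω ∈ A i j} := by
    intro i
    simp only [card_filter]
    exact Finset.measurable_sum _ fun j _ =>
      Measurable.ite (hA i j) measurable_const measurable_const
  rw [Set.ofPred_forall]
  exact .iInter fun i => measurableSet_eq_fun (hcard i) measurable_const

variable [DecidableEq ι]

theorem sum_piFinset_Icc_neg_one_pow_mul_prod_choose_mul_prod_choose {R : Type*} [CommRing R]
    {c n : ι → ℕ} (r : ι → ℕ) (hcn : c ≤ n) :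
    ∑ k ∈ Fintype.piFinset (fun i => Icc (r i) (n i)),
        (-1 : R) ^ (∑ i, (k i - r i)) * (∏ i, ((k i).choose (r i) : R)) *
          ∏ i, ((c i).choose (k i) : R) = if c = r then 1 else 0 := by
  let f : ∀ i, ℕ → R := fun i k => (-1) ^ (k - r i) * k.choose (r i) * (c i).choose k
  have hterm : ∀ k : ι → ℕ, (-1 : R) ^ (∑ i, (k i - r i)) * (∏ i, ((k i).choose (r i) : R)) *
      ∏ i, ((c i).choose (k i) : R) = ∏ i, f i (k i) := by
    simp [f, prod_mul_distrib, prod_pow_eq_pow_sum]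
  rw [sum_congr rfl fun k _ => hterm k, ← prod_univ_sum]
  simp only [f, sum_Icc_neg_one_pow_mul_choose_mul_choose _ (hcn _), Fintype.prod_boole,
    funext_iff]

theorem card_filter_piFinset_powersetCard_subset (k : ι → ℕ) (s : ∀ i, Finset (I i)) :
    #{J ∈ Fintype.piFinset (fun i => (univ : Finset (I i)).powersetCard (k i)) | ∀ i, J i ⊆ s i} =
      ∏ i, (#(s i)).choose (k i) := by
  have : {J ∈ Fintype.piFinset (fun i => (univ : Finset (I i)).powersetCard (k i)) |
      ∀ i, J i ⊆ s i} = Fintype.piFinset (fun i => (s i).powersetCard (k i)) := by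
    ext J
    simp only [mem_filter, Fintype.mem_piFinset, mem_powersetCard, subset_univ, true_and,
      ← forall_and, and_comm]
  simp [this]

theorem sum_indicator_iInter_eq_prod_choose (k : ι → ℕ) (ω : Ω) :
    ∑ J ∈ Fintype.piFinset (fun i => (univ : Finset (I i)).powersetCard (k i)),
        (⋂ i, ⋂ j ∈ J i, A i j).indicator (1 : Ω → ℝ) ω =
      ∏ i, ((#{j | ω ∈ A i j}).choose (k i) : ℝ) := by
  have hmem : ∀ J : ∀ i, Finset (I i),
      ω ∈ ⋂ i, ⋂ j ∈ J i, A i j ↔ ∀ i, J i ⊆ ({j | ω ∈ A i j} : Finset (I i)) := by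
    intro J
    simp [Finset.subset_iff]
  simp only [Set.indicator_apply, hmem, Pi.one_apply, sum_boole,
    card_filter_piFinset_powersetCard_subset, Nat.cast_prod]

theorem indicator_setOf_forall_card_eq_eq_sum (r : ι → ℕ) (ω : Ω) :
    {ω | ∀ i, #{j | ω ∈ A i j} = r i}.indicator (1 : Ω → ℝ) ω =
      ∑ k ∈ Fintype.piFinset (fun i => Icc (r i) (Fintype.card (I i))),
        (-1 : ℝ) ^ (∑ i, (k i - r i)) * (∏ i, ((k i).choose (r i) : ℝ)) *
          ∑ J ∈ Fintype.piFinset (fun i => (univ : Finset (I i)).powersetCard (k i)),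
            (⋂ i, ⋂ j ∈ J i, A i j).indicator (1 : Ω → ℝ) ω := by
  simp only [sum_indicator_iInter_eq_prod_choose]
  rw [sum_piFinset_Icc_neg_one_pow_mul_prod_choose_mul_prod_choose r
    fun i => card_le_univ {j | ω ∈ A i j}]
  simp [Set.indicator_apply, funext_iff]

end

theorem stmt_2_general {Ω : Type} [MeasurableSpace Ω] (P : Measure Ω) [IsProbabilityMeasure P]
    (q : ℕ) (I : Fin q → Type) [∀ i, Fintype (I i)]
    (A : (i : Fin q) → I i → Set Ω) (hA : ∀ i j, MeasurableSet (A i j))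
    (r : Fin q → ℕ) :
    (P {ω | ∀ i, (Finset.univ.filter fun j => ω ∈ A i j).card = r i}).toReal =
      ∑ k ∈ Fintype.piFinset (fun i => Finset.Icc (r i) (Fintype.card (I i))),
        (-1 : ℝ) ^ (∑ i, (k i - r i)) * (∏ i, ((k i).choose (r i) : ℝ)) *
          ∑ J ∈ Fintype.piFinset (fun i => (Finset.univ : Finset (I i)).powersetCard (k i)),
            (P (⋂ i, ⋂ j ∈ J i, A i j)).toReal := by
  have hB : ∀ J : ∀ i, Finset (I i), MeasurableSet (⋂ i, ⋂ j ∈ J i, A i j) :=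
    fun J => .iInter fun i => .biInter (J i).countable_toSet fun j _ => hA i j
  have hint : ∀ J : ∀ i, Finset (I i), Integrable ((⋂ i, ⋂ j ∈ J i, A i j).indicator 1) P :=
    fun J => (integrable_const (1 : ℝ)).indicator (hB J)
  rw [← measureReal_def, ← integral_indicator_one (measurableSet_setOf_forall_card_eq A hA r),
    integral_congr_ae (.of_forall (indicator_setOf_forall_card_eq_eq_sum A r)),
    integral_finsetSum _ fun k _ => (integrable_finsetSum _ fun J _ => hint J).const_mul _]
  refine sum_congr rfl fun k _ => ?_
  rw [integral_const_mul, integral_finsetSum _ fun J _ => hint J]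
  simp only [integral_indicator_one (hB _), measureReal_def]

theorem stmt_2 {Ω : Type} [MeasurableSpace Ω] (P : Measure Ω) [IsProbabilityMeasure P]
    (q : ℕ) (hq : 1 ≤ q) (I : Fin q → Type) [∀ i, Fintype (I i)]
    (A : (i : Fin q) → I i → Set Ω) (hA : ∀ i j, MeasurableSet (A i j))
    (r : Fin q → ℕ) :
    (P {ω | ∀ i, (Finset.univ.filter fun j => ω ∈ A i j).card = r i}).toReal =
      ∑ k ∈ Fintype.piFinset (fun i => Finset.Icc (r i) (Fintype.card (I i))),
        (-1 : ℝ) ^ (∑ i, (k i - r i)) * (∏ i, ((k i).choose (r i) : ℝ)) *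
          ∑ J ∈ Fintype.piFinset (fun i => (Finset.univ : Finset (I i)).powersetCard (k i)),
            (P (⋂ i, ⋂ j ∈ J i, A i j)).toReal :=
  stmt_2_general P q I A hA r
end

section
/- In order to prove that ∑_{k=1}^n λ_k P((⋂_{i∈I_k} A_i) ∩ (⋂_{i∈J_k} A_i^c)) ≥ 0 holds for every family A_1,…,A_N of events in every probability space, it suffices to prove it under the additional hypothesis that each A_i is either ∅ or the whole space Ω. -/
open MeasureTheory Finset

theorem stmt_4 (n N : ℕ) (hn : 1 ≤ n) (hN : 1 ≤ N) (lam : Fin n → ℝ)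
    (I J : Fin n → Finset (Fin N))
    (h : ∀ (Ω : Type) (_ : MeasurableSpace Ω) (P : Measure Ω),
      IsProbabilityMeasure P → ∀ A : Fin N → Set Ω, (∀ i, MeasurableSet (A i)) →
      (∀ i, A i = ∅ ∨ A i = Set.univ) →
      0 ≤ ∑ k, lam k * (P ((⋂ i ∈ I k, A i) ∩ (⋂ i ∈ J k, (A i)ᶜ))).toReal) :
    ∀ (Ω : Type) (_ : MeasurableSpace Ω) (P : Measure Ω),
      IsProbabilityMeasure P → ∀ A : Fin N → Set Ω, (∀ i, MeasurableSet (A i)) →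
      0 ≤ ∑ k, lam k * (P ((⋂ i ∈ I k, A i) ∩ (⋂ i ∈ J k, (A i)ᶜ))).toReal := by
  intro Ω mΩ P hP A hA
  classical
  set atom : Finset (Fin N) → Set Ω := fun T =>
    (⋂ i ∈ T, A i) ∩ (⋂ i ∈ Tᶜ, (A i)ᶜ) with hatom
  have mem_atom : ∀ (T : Finset (Fin N)) (ω : Ω),
      ω ∈ atom T ↔ ∀ i, ω ∈ A i ↔ i ∈ T := by
    intro T ω
    simp only [hatom, Set.mem_inter_iff, Set.mem_iInter, Finset.mem_compl,
      Set.mem_compl_iff]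
    constructor
    · rintro ⟨h1, h2⟩ i
      constructor
      · intro hi; by_contra hiT; exact h2 i hiT hi
      · exact h1 i
    · intro h'
      exact ⟨fun i hi => (h' i).2 hi, fun i hi hA' => hi ((h' i).1 hA')⟩
  have atom_meas : ∀ T, MeasurableSet (atom T) :=
    fun T => ((Finset.measurableSet_biInter _ fun i _ => hA i)).inter
      (Finset.measurableSet_biInter _ fun i _ => (hA i).compl)
  have atom_disj : ∀ T T' : Finset (Fin N), T ≠ T' → Disjoint (atom T) (atom T') := by
    intro T T' hne
    rw [Set.disjoint_left]
    intro ω hT hT'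
    apply hne
    ext i
    rw [← (mem_atom T ω).1 hT i, (mem_atom T' ω).1 hT' i]
  set cond : Finset (Fin N) → Fin n → Prop :=
    fun T k => I k ⊆ T ∧ Disjoint (J k) T with hcond
  have atom_sub : ∀ T k, cond T k →
      atom T ⊆ (⋂ i ∈ I k, A i) ∩ (⋂ i ∈ J k, (A i)ᶜ) := by
    rintro T k ⟨hI, hJ⟩ ω hω
    rw [mem_atom] at hω
    constructor
    · simp only [Set.mem_iInter]; intro i hi; exact (hω i).2 (hI hi)
    · simp only [Set.mem_iInter, Set.mem_compl_iff]
      intro i hi hAi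
      exact (Finset.disjoint_left.1 hJ) hi ((hω i).1 hAi)
  have event_eq : ∀ k, (⋂ i ∈ I k, A i) ∩ (⋂ i ∈ J k, (A i)ᶜ)
      = ⋃ T ∈ Finset.univ.filter (fun T => cond T k), atom T := by
    intro k
    ext ω
    simp only [Set.mem_iUnion, Finset.mem_filter, Finset.mem_univ, true_and]
    constructor
    · intro hω
      refine ⟨Finset.univ.filter (fun i => ω ∈ A i), ⟨?_, ?_⟩, ?_⟩
      · intro i hi
        simp only [Finset.mem_filter, Finset.mem_univ, true_and]
        exact Set.mem_iInter₂.1 hω.1 i hi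
      · rw [Finset.disjoint_left]
        intro i hi hif
        simp only [Finset.mem_filter, Finset.mem_univ, true_and] at hif
        exact Set.mem_iInter₂.1 hω.2 i hi hif
      · rw [mem_atom]; intro i; simp
    · rintro ⟨T, hT, hω⟩
      exact atom_sub T k hT hω
  have Pevent : ∀ k, (P ((⋂ i ∈ I k, A i) ∩ (⋂ i ∈ J k, (A i)ᶜ))).toReal
      = ∑ T : Finset (Fin N), (if cond T k then (1:ℝ) else 0) * (P (atom T)).toReal := by
    intro k
    rw [event_eq k, measure_biUnion_finset ?_ (fun T _ => atom_meas T)]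
    · rw [ENNReal.toReal_sum (fun T _ => measure_ne_top P _), Finset.sum_filter]
      apply Finset.sum_congr rfl
      intro T _
      by_cases hc : cond T k <;> simp [hc]
    · intro T hT T' hT' hne
      exact atom_disj T T' hne
  have hstep : ∀ T : Finset (Fin N),
      0 ≤ ∑ k, lam k * (if cond T k then (1:ℝ) else 0) := by
    intro T
    have key := h Unit ⊤ (Measure.dirac ()) (by infer_instance)
      (fun i => if i ∈ T then Set.univ else ∅)
      (fun i => MeasurableSpace.measurableSet_top)
      (fun i => by by_cases hi : i ∈ T <;> simp [hi])
    refine le_trans key (le_of_eq ?_)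
    apply Finset.sum_congr rfl
    intro k _
    congr 1
    by_cases hc : cond T k
    · have hS : ((⋂ i ∈ I k, (fun i => if i ∈ T then (Set.univ : Set Unit) else ∅) i) ∩
          (⋂ i ∈ J k, ((fun i => if i ∈ T then (Set.univ : Set Unit) else ∅) i)ᶜ)) = Set.univ := by
        apply Set.eq_univ_of_forall
        intro x
        constructor
        · simp only [Set.mem_iInter]
          intro i hi
          simp [hc.1 hi]
        · simp only [Set.mem_iInter, Set.mem_compl_iff]
          intro i hi
          simp [Finset.disjoint_left.1 hc.2 hi]
      rw [hS, if_pos hc]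
      simp
    · have hS : ((⋂ i ∈ I k, (fun i => if i ∈ T then (Set.univ : Set Unit) else ∅) i) ∩
          (⋂ i ∈ J k, ((fun i => if i ∈ T then (Set.univ : Set Unit) else ∅) i)ᶜ)) = ∅ := by
        by_cases hIk : I k ⊆ T
        · have hnd : ¬ Disjoint (J k) T := fun hd => hc ⟨hIk, hd⟩
          obtain ⟨i, hiJ, hiT⟩ := Finset.not_disjoint_iff.1 hnd
          apply Set.eq_empty_of_forall_notMem
          intro x hx
          have := Set.mem_iInter₂.1 hx.2 i hiJ
          simp [hiT] at this
        · obtain ⟨i, hiI, hiT⟩ := Finset.not_subset.1 hIk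
          apply Set.eq_empty_of_forall_notMem
          intro x hx
          have := Set.mem_iInter₂.1 hx.1 i hiI
          simp [hiT] at this
      rw [hS, if_neg hc]
      simp
  calc (0:ℝ) ≤ ∑ T : Finset (Fin N),
        (P (atom T)).toReal * ∑ k, lam k * (if cond T k then (1:ℝ) else 0) := by
        exact Finset.sum_nonneg fun T _ =>
          mul_nonneg ENNReal.toReal_nonneg (hstep T)
    _ = ∑ k, lam k * (P ((⋂ i ∈ I k, A i) ∩ (⋂ i ∈ J k, (A i)ᶜ))).toReal := by
        simp_rw [Pevent, Finset.mul_sum]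
        rw [Finset.sum_comm]
        apply Finset.sum_congr rfl
        intro T _
        apply Finset.sum_congr rfl
        intro k _
        ring
end

section
/- Let A be a set of positive integers with gcd q such that u_n := |S_{qn}^{(A)}|/(qn)! satisfies u_n/u_{n-1} → 1 as n → ∞. Let σ_n be uniformly distributed on S_{qn}^{(A)}. Then for every p ≥ 1 and every fixed σ ∈ S_p^{(A)}, the probability P(σ_n(m) = σ(m) for all m = 1,…,p) is asymptotically equivalent to (qn)^{-p} as n → ∞. -/
open Filter Function Equiv

noncomputable def permCount (A : Set ℕ) (n : ℕ) : ℕ :=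
  Nat.card {σ : Equiv.Perm (Fin n) // ∀ x, Function.minimalPeriod ⇑σ x ∈ A}

section helpers
variable {α β : Type*}

lemma iterate_permCongr_aux (e : α ≃ β) (g : Perm α) (k : ℕ) (x : α) :
    (⇑(e.permCongr g))^[k] (e x) = e ((⇑g)^[k] x) := by
  induction k with
  | zero => simp
  | succ k ih => rw [iterate_succ_apply', iterate_succ_apply', ih, permCongr_apply]; simp

lemma minimalPeriod_permCongr_aux (e : α ≃ β) (g : Perm α) (x : α) :
    minimalPeriod ⇑(e.permCongr g) (e x) = minimalPeriod ⇑g x := by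
  rw [minimalPeriod_eq_minimalPeriod_iff]
  intro n
  unfold IsPeriodicPt IsFixedPt
  rw [iterate_permCongr_aux]
  exact ⟨fun h => e.injective h, fun h => by rw [h]⟩

lemma iterate_sumCongr_inl_aux (g : Perm α) (h : Perm β) (k : ℕ) (x : α) :
    (⇑(Equiv.sumCongr g h))^[k] (Sum.inl x) = Sum.inl ((⇑g)^[k] x) := by
  induction k with
  | zero => simp
  | succ k ih => rw [iterate_succ_apply', iterate_succ_apply', ih]; simp

lemma iterate_sumCongr_inr_aux (g : Perm α) (h : Perm β) (k : ℕ) (x : β) :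
    (⇑(Equiv.sumCongr g h))^[k] (Sum.inr x) = Sum.inr ((⇑h)^[k] x) := by
  induction k with
  | zero => simp
  | succ k ih => rw [iterate_succ_apply', iterate_succ_apply', ih]; simp

lemma minimalPeriod_sumCongr_inl_aux (g : Perm α) (h : Perm β) (x : α) :
    minimalPeriod ⇑(Equiv.sumCongr g h) (Sum.inl x) = minimalPeriod ⇑g x := by
  rw [minimalPeriod_eq_minimalPeriod_iff]
  intro n
  unfold IsPeriodicPt IsFixedPt
  rw [iterate_sumCongr_inl_aux]
  exact ⟨fun h' => Sum.inl_injective h', fun h' => by rw [h']⟩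

lemma minimalPeriod_sumCongr_inr_aux (g : Perm α) (h : Perm β) (x : β) :
    minimalPeriod ⇑(Equiv.sumCongr g h) (Sum.inr x) = minimalPeriod ⇑h x := by
  rw [minimalPeriod_eq_minimalPeriod_iff]
  intro n
  unfold IsPeriodicPt IsFixedPt
  rw [iterate_sumCongr_inr_aux]
  exact ⟨fun h' => Sum.inr_injective h', fun h' => by rw [h']⟩

end helpers

lemma card_agree (A : Set ℕ) (p : ℕ) (σ : Perm (Fin p))
    (hσ : ∀ x, minimalPeriod ⇑σ x ∈ A) (N : ℕ) (hpN : p ≤ N) :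
    Nat.card {s : Perm (Fin N) //
        (∀ x, minimalPeriod ⇑s x ∈ A) ∧
        ∀ (m : Fin N) (hm : (m : ℕ) < p), (s m : ℕ) = (σ ⟨(m : ℕ), hm⟩ : ℕ)}
      = permCount A (N - p) := by
  classical
  obtain ⟨M, rfl⟩ : ∃ M, N = p + M := ⟨N - p, by omega⟩
  have hM : p + M - p = M := by omega
  rw [hM]
  set e : Fin p ⊕ Fin M ≃ Fin (p + M) := finSumFinEquiv with he
  set Φ : {τ : Perm (Fin M) // ∀ x, minimalPeriod ⇑τ x ∈ A} →
      {s : Perm (Fin (p + M)) //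
        (∀ x, minimalPeriod ⇑s x ∈ A) ∧
        ∀ (m : Fin (p + M)) (hm : (m : ℕ) < p), (s m : ℕ) = (σ ⟨(m : ℕ), hm⟩ : ℕ)} :=
    fun τ => ⟨e.permCongr (Equiv.sumCongr σ τ.1), by
      intro x
      have hx : x = e (e.symm x) := (e.apply_symm_apply x).symm
      rw [hx, minimalPeriod_permCongr_aux]
      rcases hy : e.symm x with y | y
      · rw [minimalPeriod_sumCongr_inl_aux]; exact hσ y
      · rw [minimalPeriod_sumCongr_inr_aux]; exact τ.2 y, by
      intro m hm
      have h1 : m = Fin.castAdd M (⟨(m : ℕ), hm⟩ : Fin p) := by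
        apply Fin.ext; simp
      have hsymm : e.symm m = Sum.inl ⟨(m : ℕ), hm⟩ := by
        conv_lhs => rw [h1]
        exact finSumFinEquiv_symm_apply_castAdd _
      rw [permCongr_apply, hsymm]
      simp [he]⟩
  have hbij : Function.Bijective Φ := by
    constructor
    · rintro ⟨τ₁, h1⟩ ⟨τ₂, h2⟩ h
      have h' : e.permCongr (Equiv.sumCongr σ τ₁) = e.permCongr (Equiv.sumCongr σ τ₂) :=
        congrArg Subtype.val h
      have h'' := e.permCongr.injective h'
      ext j
      have := congrArg (fun f : Perm (Fin p ⊕ Fin M) => f (Sum.inr j)) h''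
      exact congrArg Fin.val (by simpa using this)
    · rintro ⟨s, hs1, hs2⟩
      set g : Perm (Fin p ⊕ Fin M) := e.symm.permCongr s with hgdef
      have hgl : ∀ i, g (Sum.inl i) = Sum.inl (σ i) := by
        intro i
        have h1 : (s (Fin.castAdd M i) : ℕ) = (σ i : ℕ) := by
          have := hs2 (e (Sum.inl i)) (by simp [he, Fin.is_lt])
          simpa [he] using this
        have h2 : s (Fin.castAdd M i) = Fin.castAdd M (σ i) := by
          apply Fin.ext; simpa using h1
        simp only [hgdef, permCongr_apply, symm_symm]
        rw [show e (Sum.inl i) = Fin.castAdd M i from finSumFinEquiv_apply_left i, h2]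
        exact finSumFinEquiv_symm_apply_castAdd _
      have hgr : ∀ j, ∃ b, g (Sum.inr j) = Sum.inr b := by
        intro j
        rcases h : g (Sum.inr j) with a | b
        · exfalso
          have h2 : g (Sum.inl (σ.symm a)) = Sum.inl a := by rw [hgl]; simp
          have := g.injective (h.trans h2.symm)
          simp at this
        · exact ⟨b, rfl⟩
      set τ' : Fin M → Fin M := fun j => (g (Sum.inr j)).elim (fun _ => j) id with hτ'def
      have hτ' : ∀ j, g (Sum.inr j) = Sum.inr (τ' j) := by
        intro j
        obtain ⟨b, hb⟩ := hgr j
        rw [hb]; simp [hτ'def, hb]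
      have hinj : Function.Injective τ' := by
        intro j₁ j₂ h
        have : g (Sum.inr j₁) = g (Sum.inr j₂) := by rw [hτ' j₁, hτ' j₂, h]
        simpa using g.injective this
      set τ : Perm (Fin M) := Equiv.ofBijective τ' (Finite.injective_iff_bijective.mp hinj)
        with hτdef
      have hτapp : ∀ j, τ j = τ' j := fun j => rfl
      have hg : Equiv.sumCongr σ τ = g := by
        ext x
        rcases x with i | j
        · simp [hgl]
        · simp [hτapp, hτ' j]
      have hs : e.permCongr (Equiv.sumCongr σ τ) = s := by
        rw [hg, hgdef, ← Equiv.permCongr_symm, Equiv.apply_symm_apply]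
      refine ⟨⟨τ, ?_⟩, Subtype.ext hs⟩
      intro x
      have h1 : minimalPeriod ⇑τ x = minimalPeriod ⇑(Equiv.sumCongr σ τ) (Sum.inr x) :=
        (minimalPeriod_sumCongr_inr_aux _ _ _).symm
      have h2 : minimalPeriod ⇑(Equiv.sumCongr σ τ) (Sum.inr x)
          = minimalPeriod ⇑(e.permCongr (Equiv.sumCongr σ τ)) (e (Sum.inr x)) :=
        (minimalPeriod_permCongr_aux _ _ _).symm
      rw [h1, h2, hs]; exact hs1 _
  exact (Nat.card_eq_of_bijective Φ hbij).symm

lemma q_dvd_aux (A : Set ℕ) (q : ℕ) (hA : ∀ a ∈ A, q ∣ a) (p : ℕ) (σ : Perm (Fin p))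
    (hσ : ∀ x, minimalPeriod ⇑σ x ∈ A) : q ∣ p := by
  classical
  have hcard := Fintype.card_congr (MulAction.selfEquivSigmaOrbits (Subgroup.zpowers σ) (Fin p))
  rw [Fintype.card_fin, Fintype.card_sigma] at hcard
  rw [hcard]
  apply Finset.dvd_sum
  intro ω _
  simp only [← Nat.card_eq_fintype_card]
  rw [Nat.card_eq_fintype_card, ← MulAction.minimalPeriod_eq_card]
  exact hA _ (hσ _)

lemma fact_prod_aux (a j : ℕ) :
    (a + j).factorial = a.factorial * ∏ i ∈ Finset.range j, (a + i + 1) := by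
  induction j with
  | zero => simp
  | succ j ih =>
    rw [← Nat.add_assoc, Nat.factorial_succ, ih, Finset.prod_range_succ]
    ring

lemma tendsto_ratio_aux (q : ℕ) (hq : 0 < q) (d : ℝ) :
    Tendsto (fun n : ℕ => ((q * n : ℕ) : ℝ) / (((q * n : ℕ) : ℝ) - d)) atTop (nhds 1) := by
  have hx : Tendsto (fun n : ℕ => ((q * n : ℕ) : ℝ)) atTop atTop := by
    apply tendsto_natCast_atTop_atTop.comp
    exact tendsto_atTop_mono (fun n => Nat.le_mul_of_pos_left n hq) tendsto_id
  have h2 : Tendsto (fun n : ℕ => ((q * n : ℕ) : ℝ) - d) atTop atTop :=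
    tendsto_atTop_add_const_right _ (-d) hx |>.congr (fun n => by ring)
  have h3 : Tendsto (fun n : ℕ => d / (((q * n : ℕ) : ℝ) - d)) atTop (nhds 0) :=
    h2.const_div_atTop d
  have h4 : Tendsto (fun n : ℕ => 1 + d / (((q * n : ℕ) : ℝ) - d)) atTop (nhds 1) := by
    have := tendsto_const_nhds.add h3 (f := fun _ : ℕ => (1:ℝ))
    simpa using this
  apply h4.congr'
  filter_upwards [h2.eventually_gt_atTop 0] with n hn
  have hne : ((q * n : ℕ) : ℝ) - d ≠ 0 := ne_of_gt hn
  rw [eq_div_iff hne, add_mul, one_mul, div_mul_cancel₀ _ hne]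
  ring

theorem stmt_13 (A : Set ℕ) (q : ℕ) (hq : 0 < q)
    (hgcd : (∀ a ∈ A, q ∣ a) ∧ ∀ d : ℕ, (∀ a ∈ A, d ∣ a) → d ∣ q)
    (hu : Tendsto (fun n : ℕ =>
        ((permCount A (q * n) : ℝ) / (q * n).factorial) /
          ((permCount A (q * (n - 1)) : ℝ) / (q * (n - 1)).factorial))
      atTop (nhds 1))
    (p : ℕ) (hp : 1 ≤ p) (σ : Equiv.Perm (Fin p))
    (hσ : ∀ x, Function.minimalPeriod ⇑σ x ∈ A) :
    Tendsto (fun n : ℕ =>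
      ((Nat.card {s : Equiv.Perm (Fin (q * n)) //
          (∀ x, Function.minimalPeriod ⇑s x ∈ A) ∧
          ∀ (m : Fin (q * n)) (hm : (m : ℕ) < p), (s m : ℕ) = (σ ⟨(m : ℕ), hm⟩ : ℕ)} : ℝ) /
        (permCount A (q * n) : ℝ)) * ((q * n : ℕ) : ℝ) ^ p)
      atTop (nhds 1) := by
  classical
  obtain ⟨hA, -⟩ := hgcd
  obtain ⟨k, rfl⟩ := q_dvd_aux A q hA p σ hσ
  set w : ℕ → ℝ := fun n => (permCount A (q * n) : ℝ) / (q * n).factorial with hw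
  have hu' : Tendsto (fun n => w n / w (n - 1)) atTop (nhds 1) := hu
  have hne : ∀ᶠ n in atTop, w n ≠ 0 := by
    filter_upwards [hu'.eventually_ne one_ne_zero] with n hn
    intro h0
    apply hn; rw [h0, zero_div]
  obtain ⟨N0, hN0⟩ := eventually_atTop.mp hne
  have hrec : Tendsto (fun n => w (n - 1) / w n) atTop (nhds 1) := by
    have h := hu'.inv₀ one_ne_zero
    rw [inv_one] at h
    exact h.congr (fun n => by rw [inv_div])
  have L : ∀ j : ℕ, Tendsto (fun n => w (n - j) / w n) atTop (nhds 1) := by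
    intro j
    induction j with
    | zero =>
      apply Tendsto.congr' _ (tendsto_const_nhds (x := (1:ℝ)))
      filter_upwards [hne] with n hn
      rw [Nat.sub_zero, div_self hn]
    | succ j ih =>
      have h2 : Tendsto (fun n => w ((n - 1) - j) / w (n - 1)) atTop (nhds 1) :=
        ih.comp (tendsto_sub_atTop_nat 1)
      have h3 := h2.mul hrec
      rw [mul_one] at h3
      apply h3.congr'
      filter_upwards [eventually_atTop.mpr ⟨N0 + 1, fun n hn => hN0 (n - 1) (by omega)⟩]
        with n hn
      have he : n - 1 - j = n - (j + 1) := by omega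
      rw [he, div_mul_div_comm, mul_comm (w (n - (j + 1))) (w (n - 1)),
        mul_div_mul_left _ _ hn]
  have F : Tendsto (fun n : ℕ => ((q * (n - k)).factorial : ℝ) / ((q * n).factorial : ℝ) *
      ((q * n : ℕ) : ℝ) ^ (q * k)) atTop (nhds 1) := by
    have hprod : Tendsto (fun n : ℕ => ∏ i ∈ Finset.range (q * k),
        (((q * n : ℕ) : ℝ) / (((q * n : ℕ) : ℝ) - (((q * k : ℕ) : ℝ) - i - 1))))
        atTop (nhds 1) := by
      have h := tendsto_finset_prod (Finset.range (q * k))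
        (fun i _ => tendsto_ratio_aux q hq (((q * k : ℕ) : ℝ) - i - 1))
      simpa using h
    apply hprod.congr'
    filter_upwards [eventually_ge_atTop k] with n hn
    have ha : q * (n - k) + q * k = q * n := by
      rw [← Nat.mul_add]; congr 1; omega
    have hcast : ((q * (n - k) : ℕ) : ℝ) = ((q * n : ℕ) : ℝ) - ((q * k : ℕ) : ℝ) := by
      rw [← ha]; push_cast; ring
    have hfact : ((q * n).factorial : ℝ) =
        ((q * (n - k)).factorial : ℝ) *
          ∏ i ∈ Finset.range (q * k), (((q * (n - k) : ℕ) : ℝ) + i + 1) := by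
      rw [← ha, fact_prod_aux]
      push_cast
      ring
    have hbody : ∀ i ∈ Finset.range (q * k),
        ((q * n : ℕ) : ℝ) / (((q * n : ℕ) : ℝ) - (((q * k : ℕ) : ℝ) - i - 1))
          = ((q * n : ℕ) : ℝ) / (((q * (n - k) : ℕ) : ℝ) + i + 1) := by
      intro i _
      congr 1
      rw [hcast]; ring
    rw [Finset.prod_congr rfl hbody, Finset.prod_div_distrib, Finset.prod_const,
      Finset.card_range, hfact]
    have hfne : ((q * (n - k)).factorial : ℝ) ≠ 0 :=
      Nat.cast_ne_zero.mpr (Nat.factorial_ne_zero _)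
    rw [div_mul_eq_mul_div, mul_div_mul_left _ _ hfne]
  have key := (L k).mul F
  rw [mul_one] at key
  have heq : (fun n => (w (n - k) / w n) *
      (((q * (n - k)).factorial : ℝ) / ((q * n).factorial : ℝ) * ((q * n : ℕ) : ℝ) ^ (q * k)))
      =ᶠ[atTop] (fun n : ℕ =>
      ((Nat.card {s : Equiv.Perm (Fin (q * n)) //
          (∀ x, Function.minimalPeriod ⇑s x ∈ A) ∧
          ∀ (m : Fin (q * n)) (hm : (m : ℕ) < q * k),
            (s m : ℕ) = (σ ⟨(m : ℕ), hm⟩ : ℕ)} : ℝ) /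
        (permCount A (q * n) : ℝ)) * ((q * n : ℕ) : ℝ) ^ (q * k)) := by
    filter_upwards [eventually_ge_atTop k] with n hn
    have hpn : q * k ≤ q * n := Nat.mul_le_mul_left q hn
    have hsub : q * n - q * k = q * (n - k) := by
      rw [Nat.mul_sub]
    rw [card_agree A (q * k) σ hσ (q * n) hpn, hsub]
    have hfne1 : ((q * (n - k)).factorial : ℝ) ≠ 0 :=
      Nat.cast_ne_zero.mpr (Nat.factorial_ne_zero _)
    have hfne2 : ((q * n).factorial : ℝ) ≠ 0 :=
      Nat.cast_ne_zero.mpr (Nat.factorial_ne_zero _)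
    have e1 : (permCount A (q * (n - k)) : ℝ) = w (n - k) * ((q * (n - k)).factorial : ℝ) := by
      rw [hw]; simp only []; rw [div_mul_cancel₀ _ hfne1]
    have e2 : (permCount A (q * n) : ℝ) = w n * ((q * n).factorial : ℝ) := by
      rw [hw]; simp only []; rw [div_mul_cancel₀ _ hfne2]
    rw [e1, e2, mul_div_mul_comm]
    ring
  exact key.congr' heq
end

section
/- Let A be a finite set of positive integers with maximum d, and for n with S_n^{(A)} ≠ ∅ let σ_n be uniform on S_n^{(A)}. Fix l ∈ A and positive integers j. Then P(each of 1,…,j belongs to a cycle of σ_n of length l) = ∑_{π ∈ P(j)} [1/(n(n-1)⋯(n-j+1))] · [(|S_{n-l|π|}^{(A)}|/(n-l|π|)!)/(|S_n^{(A)}|/n!)] · ∏_{V∈π} (l-1)!/(l-|V|)!, where P(j) is the set of partitions of {1,…,j}, the product being taken as 0 for blocks V with |V| > l. -/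
/-!
Sort the permutations according to how their cycles partition the marked points `0, …, j - 1`.
If the marked points lie on `l`-cycles grouped according to `π` (with `k` blocks), these `k`
cycles, each read off from the base point of its block, form an injective table
`π × Fin l ↪ Fin n`. Such a table amounts to the positions of the marked points on their cycles
(`∏ V, (l - 1)! / (l - |V|)!` choices) together with an injective filling of the other `l k - j`
slots by unmarked points (`(n - j)! / (n - l k)!` choices), and the permutation is the table's
cycles glued to an arbitrary `A`-permutation of the remaining `n - l k` points. Dividing by
`|S_n^(A)|` gives the summand of `π`.
-/

open Finset
open scoped Classical

open Function Equiv

theorem Function.Semiconj.minimalPeriod_apply_eq {α β : Type*} {fa : α → α} {fb : β → β}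
    {g : α → β} (h : Semiconj g fa fb) (hg : Injective g) (x : α) :
    minimalPeriod fb (g x) = minimalPeriod fa x := by
  refine minimalPeriod_eq_minimalPeriod_iff.mpr fun m => ?_
  simp only [IsPeriodicPt, IsFixedPt, ← (h.iterate_right m).eq, hg.eq_iff]

open Fin.NatCast in
theorem iterate_fin_val_natCast {α : Type*} {f : α → α} {x : α} {l : ℕ} [NeZero l]
    (hx : minimalPeriod f x = l) (m : ℕ) : f^[((m : Fin l) : ℕ)] x = f^[m] x := by
  rw [Fin.val_natCast, ← hx, iterate_mod_minimalPeriod_eq]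

namespace Equiv.Perm

theorem sameCycle_iff_exists_iterate {α : Type*} [Finite α] {σ : Perm α} {x y : α} :
    σ.SameCycle x y ↔ ∃ m : ℕ, (⇑σ)^[m] x = y := by
  simp only [iterate_eq_pow]
  exact ⟨SameCycle.exists_nat_pow_eq, fun ⟨m, hm⟩ => ⟨m, by rwa [zpow_natCast]⟩⟩

theorem _root_.Function.Semiconj.sameCycle_apply_iff {α γ : Type*} [Finite α] [Finite γ]
    {σ : Perm α} {ρ : Perm γ} {F : γ → α} (h : Semiconj F ρ σ) (hF : Injective F)
    {c c' : γ} :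
    σ.SameCycle (F c) (F c') ↔ ρ.SameCycle c c' := by
  simp only [sameCycle_iff_exists_iterate, ← (h.iterate_right _).eq, hF.eq_iff]

open Fin.NatCast in
theorem SameCycle.exists_fin_iterate_eq {α : Type*} [Finite α] {σ : Perm α} {x y : α} {l : ℕ}
    [NeZero l] (h : σ.SameCycle x y) (hx : minimalPeriod σ x = l) :
    ∃ i : Fin l, (⇑σ)^[i] x = y := by
  obtain ⟨m, rfl⟩ := sameCycle_iff_exists_iterate.mp h
  exact ⟨m, iterate_fin_val_natCast hx m⟩

end Equiv.Perm

theorem card_perm_minimalPeriod_mem {γ : Type*} [Finite γ] (A : Set ℕ) :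
    Nat.card {σ : Perm γ // ∀ x, minimalPeriod σ x ∈ A} = permCount A (Nat.card γ) := by
  let e := Finite.equivFin γ
  have he (σ : Perm γ) : Semiconj e σ (e.permCongr σ) := fun x => by simp [permCongr_apply]
  refine Nat.card_congr (e.permCongr.subtypeEquiv fun σ => ?_)
  refine ⟨fun h y => ?_, fun h x => ?_⟩
  · rw [← e.apply_symm_apply y, (he σ).minimalPeriod_apply_eq e.injective]
    exact h _
  · rw [← (he σ).minimalPeriod_apply_eq e.injective]
    exact h _

theorem Nat.cast_descFactorial_eq_div {K : Type*} [Field K] [CharZero K] {m k : ℕ} (h : k ≤ m) :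
    (m.descFactorial k : K) = m.factorial / (m - k).factorial := by
  rw [eq_div_iff (Nat.cast_ne_zero.mpr (Nat.factorial_ne_zero _)), ← Nat.cast_mul, mul_comm,
    Nat.factorial_mul_descFactorial h]

theorem Nat.cast_descFactorial_pred_eq_ite {K : Type*} [Field K] [CharZero K] {l v : ℕ}
    (hl : 0 < l) (hv : 0 < v) :
    ((l - 1).descFactorial (v - 1) : K) =
      if v ≤ l then ((l - 1).factorial : K) / (l - v).factorial else 0 := by
  split_ifs with h
  · rw [Nat.cast_descFactorial_eq_div (m := l - 1) (k := v - 1) (by omega),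
      show l - 1 - (v - 1) = l - v by omega]
  · rw [(Nat.descFactorial_eq_zero_iff_lt (n := l - 1) (k := v - 1)).mpr (by omega),
      Nat.cast_zero]

section BlockRotation

variable (X : Type*) (l : ℕ) [NeZero l]

open Fin.NatCast in
theorem minimalPeriod_add_one_fin (i : Fin l) : minimalPeriod (· + 1) i = l := by
  refine Nat.dvd_right_iff_eq.mp fun m => ?_
  rw [← isPeriodicPt_iff_minimalPeriod_dvd, IsPeriodicPt, IsFixedPt, add_right_iterate]
  simp only [nsmul_one, add_eq_left, Fin.natCast_eq_zero]

def blockRotation : Perm (X × Fin l) := prodCongr (Equiv.refl X) (Equiv.addRight 1)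

variable {X l}

theorem minimalPeriod_blockRotation (p : X × Fin l) :
    minimalPeriod (blockRotation X l) p = l := by
  simp [blockRotation, minimalPeriod_prodMap, minimalPeriod_add_one_fin]

open Fin.NatCast in
theorem iterate_blockRotation (x : X) (i : Fin l) (m : ℕ) :
    (⇑(blockRotation X l))^[m] (x, i) = (x, i + m) := by
  simp [blockRotation, Prod.map_iterate, add_right_iterate]

open Fin.NatCast in
theorem blockRotation_sameCycle_iff [Finite X] {p q : X × Fin l} :
    (blockRotation X l).SameCycle p q ↔ p.1 = q.1 := by
  obtain ⟨x, i⟩ := p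
  obtain ⟨y, i'⟩ := q
  simp only [Perm.sameCycle_iff_exists_iterate, iterate_blockRotation, Prod.mk.injEq]
  refine ⟨fun ⟨_, h, _⟩ => h, fun h => ⟨(i' - i : Fin l), h, ?_⟩⟩
  rw [Fin.cast_val_eq_self, add_sub_cancel]

end BlockRotation

namespace Equiv.Perm

variable {α γ : Type*} (F : γ ↪ α) (ρ : Perm γ)

noncomputable def glueAlong (τ : Perm {a // a ∉ Set.range F}) : Perm α :=
  subtypeCongr ((Equiv.ofInjective F F.injective).permCongr ρ) τ

variable {F ρ} (τ : Perm {a // a ∉ Set.range F})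

theorem glueAlong_apply_emb (c : γ) : glueAlong F ρ τ (F c) = F (ρ c) := by
  rw [glueAlong, subtypeCongr.left_apply _ _ (Set.mem_range_self c), permCongr_apply,
    ofInjective_symm_apply, ofInjective_apply]

theorem glueAlong_apply_compl (a : {a // a ∉ Set.range F}) : glueAlong F ρ τ a = τ a :=
  subtypeCongr.right_apply_subtype _ _ a

theorem semiconj_glueAlong : Semiconj F ρ (glueAlong F ρ τ) :=
  fun c => (glueAlong_apply_emb τ c).symm

theorem semiconj_val_glueAlong : Semiconj Subtype.val τ (glueAlong F ρ τ) :=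
  fun a => (glueAlong_apply_compl τ a).symm

theorem glueAlong_injective : Injective (glueAlong F ρ) := fun τ τ' h =>
  Equiv.ext fun a => Subtype.ext <| by rw [← glueAlong_apply_compl, h, glueAlong_apply_compl]

theorem _root_.Function.Semiconj.apply_mem_range_iff {σ : Perm α} (h : Semiconj F ρ σ)
    (a : α) : σ a ∈ Set.range F ↔ a ∈ Set.range F := by
  refine ⟨fun ⟨c, hc⟩ => ⟨ρ.symm c, σ.injective ?_⟩,
    fun ⟨c, hc⟩ => ⟨ρ c, hc ▸ h.eq c⟩⟩
  rw [← h.eq, apply_symm_apply, hc]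

theorem glueAlong_subtypePerm {σ : Perm α} (h : Semiconj F ρ σ) :
    glueAlong F ρ (σ.subtypePerm fun a => not_congr (h.apply_mem_range_iff a)) = σ := by
  ext a
  by_cases ha : a ∈ Set.range F
  · obtain ⟨c, rfl⟩ := ha
    rw [glueAlong_apply_emb, h.eq]
  · exact glueAlong_apply_compl _ ⟨a, ha⟩

end Equiv.Perm

namespace Function.Embedding

variable {α β γ : Type*} (g : β ↪ γ) (ι : β ↪ α)

theorem card_compl_range [Fintype α] [Fintype β] :
    Nat.card {a // a ∉ Set.range ι} = Nat.card α - Nat.card β := by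
  simp only [Nat.card_eq_fintype_card]
  rw [Fintype.card_subtype_compl, ← Set.card_range_of_injective ι.injective]

noncomputable def extensionsEquiv :
    {F : γ ↪ α // ∀ b, F (g b) = ι b} ≃
      ({c // c ∉ Set.range g} ↪ {a // a ∉ Set.range ι}) where
  toFun F :=
    ⟨fun c => ⟨F.1 c, fun ⟨b, hb⟩ => c.2 ⟨b, F.1.injective (by rw [F.2, hb])⟩⟩,
      fun c c' h => Subtype.ext (F.1.injective (congrArg Subtype.val h))⟩
  invFun e := by
    have hg (b : β) (h : g b ∈ Set.range g) : h.choose = b := g.injective h.choose_spec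
    refine ⟨⟨fun c => if h : c ∈ Set.range g then ι h.choose else e ⟨c, h⟩,
      fun c c' hcc' => ?_⟩,
      fun b => (dif_pos (Set.mem_range_self b)).trans (congrArg ι (hg b _))⟩
    by_cases hc : c ∈ Set.range g <;> by_cases hc' : c' ∈ Set.range g <;>
      simp only [hc, hc', dite_true, dite_false] at hcc'
    · rw [← hc.choose_spec, ← hc'.choose_spec, ι.injective hcc']
    · exact absurd ⟨_, hcc'⟩ (e ⟨c', hc'⟩).2
    · exact absurd ⟨_, hcc'.symm⟩ (e ⟨c, hc⟩).2
    · exact congrArg Subtype.val (e.injective (Subtype.ext hcc'))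
  left_inv F := by
    ext c
    by_cases hc : c ∈ Set.range g
    · obtain ⟨b, rfl⟩ := hc
      simp [F.2, g.injective.eq_iff]
    · exact dif_neg hc
  right_inv e := by
    ext c
    exact dif_neg c.2

variable [Fintype α] [Fintype β] [Fintype γ]

theorem card_extensions :
    Nat.card {F : γ ↪ α // ∀ b, F (g b) = ι b} =
      (Nat.card α - Nat.card β).descFactorial (Nat.card γ - Nat.card β) := by
  rw [Nat.card_congr (extensionsEquiv g ι), ← card_compl_range g, ← card_compl_range ι]
  simp only [Nat.card_eq_fintype_card, Fintype.card_embedding_eq]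

theorem card_apply_eq (c : γ) (a : α) :
    Nat.card {F : γ ↪ α // F c = a} = (Nat.card α - 1).descFactorial (Nat.card γ - 1) := by
  rw [← Nat.card_unique (α := Unit), ← card_extensions (punit c) (punit a)]
  exact Nat.card_congr (Equiv.subtypeEquivRight fun F => by simp [punit])

end Function.Embedding

def IsBlockPartition {β : Type*} (π : Finset (Finset β)) : Prop :=
  (∀ V ∈ π, V.Nonempty) ∧ ∀ x : β, ∃! V, V ∈ π ∧ x ∈ V

namespace IsBlockPartition

variable {β : Type*} {π : Finset (Finset β)}

noncomputable def partOf (hπ : IsBlockPartition π) (x : β) : π :=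
  ⟨π.choose (x ∈ ·) (hπ.2 x), π.choose_mem _ _⟩

noncomputable def base (hπ : IsBlockPartition π) (V : π) : β := (hπ.1 V V.2).choose

theorem partOf_eq_iff (hπ : IsBlockPartition π) {x : β} {V : π} :
    hπ.partOf x = V ↔ x ∈ (V : Finset β) := by
  have hx : x ∈ (hπ.partOf x : Finset β) := π.choose_property (x ∈ ·) (hπ.2 x)
  refine ⟨fun h => h ▸ hx, fun h => Subtype.ext ?_⟩
  exact (hπ.2 x).unique ⟨(hπ.partOf x).2, hx⟩ ⟨V.2, h⟩

theorem partOf_base (hπ : IsBlockPartition π) (V : π) : hπ.partOf (hπ.base V) = V :=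
  hπ.partOf_eq_iff.mpr (hπ.1 V V.2).choose_spec

theorem card_fiber (hπ : IsBlockPartition π) (V : π) :
    Nat.card {x // hπ.partOf x = V} = (V : Finset β).card := by
  rw [Nat.card_congr (Equiv.subtypeEquivRight fun x => hπ.partOf_eq_iff), Nat.card_eq_finsetCard]

variable [Fintype β]

theorem sum_card (hπ : IsBlockPartition π) : ∑ V ∈ π, V.card = Nat.card β := by
  rw [← Nat.card_congr (Equiv.sigmaFiberEquiv hπ.partOf), Nat.card_sigma,
    ← Finset.sum_coe_sort π]
  simp only [hπ.card_fiber]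

theorem card_le (hπ : IsBlockPartition π) : π.card ≤ Nat.card β := by
  rw [← hπ.sum_card, Finset.card_eq_sum_ones]
  exact Finset.sum_le_sum fun V hV => (hπ.1 V hV).card_pos

end IsBlockPartition

section CyclePartition

variable {α β : Type*} [Fintype β] (ι : β → α)

noncomputable def cyclePartition (σ : Perm α) : Finset (Finset β) :=
  univ.image fun x => univ.filter fun y => σ.SameCycle (ι x) (ι y)

theorem isBlockPartition_cyclePartition (σ : Perm α) :
    IsBlockPartition (cyclePartition ι σ) := by
  refine ⟨?_, fun x =>
    ⟨_, ⟨mem_image_of_mem _ (mem_univ x), by simp [Perm.SameCycle.refl]⟩, ?_⟩⟩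
  · simp only [cyclePartition, mem_image, mem_univ, true_and, forall_exists_index,
      forall_apply_eq_imp_iff]
    exact fun x => ⟨x, by simp [Perm.SameCycle.refl]⟩
  · rintro V ⟨hV, hxV⟩
    simp only [cyclePartition, mem_image, mem_univ, true_and] at hV
    obtain ⟨y, rfl⟩ := hV
    simp only [mem_filter, mem_univ, true_and] at hxV
    ext z
    simp only [mem_filter, mem_univ, true_and]
    exact ⟨fun h => hxV.symm.trans h, fun h => hxV.trans h⟩

theorem cyclePartition_eq_iff {σ : Perm α} {π : Finset (Finset β)} (hπ : IsBlockPartition π) :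
    cyclePartition ι σ = π ↔
      ∀ x y, σ.SameCycle (ι x) (ι y) ↔ hπ.partOf x = hπ.partOf y := by
  constructor
  · rintro rfl x y
    have hx : hπ.partOf x = ⟨_, mem_image_of_mem _ (mem_univ x)⟩ :=
      hπ.partOf_eq_iff.mpr (by simp [Perm.SameCycle.refl])
    rw [hx, eq_comm, hπ.partOf_eq_iff]
    simp
  · intro h
    have hblock (x : β) :
        (univ.filter fun y => σ.SameCycle (ι x) (ι y)) = (hπ.partOf x : Finset β) := by
      ext y
      simp [h, eq_comm (a := hπ.partOf x), hπ.partOf_eq_iff]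
    ext V
    simp only [cyclePartition, hblock, mem_image, mem_univ, true_and]
    refine ⟨fun ⟨x, hx⟩ => hx ▸ (hπ.partOf x).2, fun hV => ?_⟩
    obtain ⟨x, hx⟩ := hπ.1 V hV
    exact ⟨x, congrArg Subtype.val (hπ.partOf_eq_iff (V := ⟨V, hV⟩) |>.mpr hx)⟩

def PlacesOnCycles (l : ℕ) (π : Finset (Finset β)) (σ : Perm α) : Prop :=
  (∀ b, minimalPeriod σ (ι b) = l) ∧ cyclePartition ι σ = π

theorem card_eq_sum_card_placesOnCycles [Fintype α] (P : Perm α → Prop) (l : ℕ) :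
    Nat.card {σ : Perm α // P σ ∧ ∀ b, minimalPeriod σ (ι b) = l} =
      ∑ π ∈ univ.filter IsBlockPartition,
        Nat.card {σ // P σ ∧ PlacesOnCycles ι l π σ} := by
  simp only [Nat.card_eq_fintype_card, Fintype.card_subtype]
  rw [card_eq_sum_card_fiberwise (f := cyclePartition ι) (t := univ.filter IsBlockPartition)
    fun σ _ => by simpa using isBlockPartition_cyclePartition ι σ]
  refine sum_congr rfl fun π _ => ?_
  rw [filter_filter]
  exact congrArg card (filter_congr fun σ _ => by rw [PlacesOnCycles, and_assoc])

end CyclePartition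

namespace IsBlockPartition

section Codes

variable {α β : Type*} {π : Finset (Finset β)} (hπ : IsBlockPartition π) (l : ℕ) [NeZero l]

/-- For each block `V`, the positions of its points along the `l`-cycle through `V`, counted from
the base point of `V`. -/
abbrev Placement : Type _ :=
  ∀ V : π, {e : {x // hπ.partOf x = V} ↪ Fin l // e ⟨hπ.base V, hπ.partOf_base V⟩ = 0}

variable {hπ l}

noncomputable def Placement.toEmb (P : hπ.Placement l) : β ↪ π × Fin l :=
  ((Equiv.sigmaFiberEquiv hπ.partOf).symm.toEmbedding.trans
    (Embedding.sigmaMap (Embedding.refl π) fun V => (P V).1)).trans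
    (Equiv.sigmaEquivProd π (Fin l)).toEmbedding

theorem Placement.toEmb_eq_iff (P : hπ.Placement l) {x : β} {V : π} {i : Fin l} :
    P.toEmb x = (V, i) ↔ ∃ h : hπ.partOf x = V, (P V).1 ⟨x, h⟩ = i := by
  change (hπ.partOf x, (P _).1 ⟨x, rfl⟩) = (V, i) ↔ _
  constructor
  · intro h
    obtain ⟨rfl, hi⟩ := Prod.ext_iff.mp h
    exact ⟨rfl, hi⟩
  · rintro ⟨rfl, rfl⟩
    rfl

theorem Placement.toEmb_base (P : hπ.Placement l) (V : π) : P.toEmb (hπ.base V) = (V, 0) :=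
  P.toEmb_eq_iff.mpr ⟨hπ.partOf_base V, (P V).2⟩

theorem Placement.toEmb_injective :
    Injective (Placement.toEmb : hπ.Placement l → β ↪ π × Fin l) := by
  intro P P' h
  funext V
  refine Subtype.ext (DFunLike.ext _ _ fun ⟨x, hx⟩ => ?_)
  obtain ⟨_, hP'⟩ := P'.toEmb_eq_iff.mp (h ▸ P.toEmb_eq_iff.mpr ⟨hx, rfl⟩)
  exact hP'.symm

variable (hπ l) [Fintype α] [Fintype β]

theorem card_placement :
    Nat.card (hπ.Placement l) = ∏ V ∈ π, (l - 1).descFactorial (V.card - 1) := by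
  rw [← Finset.prod_coe_sort π]
  refine (Nat.card_pi ..).trans (Finset.prod_congr rfl fun V _ => ?_)
  rw [Embedding.card_apply_eq, Nat.card_fin, hπ.card_fiber]

/-- `F (V, i)` is the `i`-th point of the `l`-cycle through the block `V`, starting from its base
point; the placement says where on its cycle each marked point sits. -/
abbrev CycleCode (ι : β ↪ α) : Type _ :=
  Σ P : hπ.Placement l, {F : π × Fin l ↪ α // ∀ x, F (P.toEmb x) = ι x}

variable (ι : β ↪ α)

theorem card_cycleCode :
    Nat.card (hπ.CycleCode l ι) = (∏ V ∈ π, (l - 1).descFactorial (V.card - 1)) *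
      (Nat.card α - Nat.card β).descFactorial (l * π.card - Nat.card β) := by
  rw [Nat.card_sigma]
  simp only [Embedding.card_extensions, Nat.card_prod, Nat.card_fin, Nat.card_eq_finsetCard]
  rw [sum_const, card_univ, ← Nat.card_eq_fintype_card, card_placement, smul_eq_mul,
    mul_comm π.card l]

end Codes

namespace CycleCode

variable {α β : Type*} {π : Finset (Finset β)}
  {hπ : IsBlockPartition π} {l : ℕ} [NeZero l] {ι : β ↪ α}

variable (c : hπ.CycleCode l ι)

def emb : π × Fin l ↪ α := c.2.1

theorem emb_toEmb (x : β) : c.emb (c.1.toEmb x) = ι x := c.2.2 x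

theorem emb_zero (V : π) : c.emb (V, 0) = ι (hπ.base V) := by
  rw [← c.1.toEmb_base, emb_toEmb]

noncomputable def perm (τ : Perm {a // a ∉ Set.range c.emb}) : Perm α :=
  Perm.glueAlong c.emb (blockRotation π l) τ

variable {c} (τ : Perm {a // a ∉ Set.range c.emb})

open Fin.NatCast in
theorem emb_eq_iterate (V : π) (i : Fin l) :
    c.emb (V, i) = (⇑(c.perm τ))^[i] (ι (hπ.base V)) := by
  rw [← c.emb_zero, perm, ← ((Perm.semiconj_glueAlong τ).iterate_right (i : ℕ)).eq,
    iterate_blockRotation, zero_add, Fin.cast_val_eq_self]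

theorem placesOnCycles_perm [Finite α] [Fintype β] : PlacesOnCycles ι l π (c.perm τ) := by
  have h := Perm.semiconj_glueAlong (ρ := blockRotation π l) τ
  refine ⟨fun b => ?_, (cyclePartition_eq_iff ι hπ).mpr fun x y => ?_⟩
  · rw [← c.emb_toEmb b, perm, h.minimalPeriod_apply_eq c.emb.injective,
      minimalPeriod_blockRotation]
  · rw [← c.emb_toEmb x, ← c.emb_toEmb y, perm, h.sameCycle_apply_iff c.emb.injective,
      blockRotation_sameCycle_iff]
    rfl

theorem forall_minimalPeriod_perm_mem_iff {A : Set ℕ} (hlA : l ∈ A) :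
    (∀ a, minimalPeriod (c.perm τ) a ∈ A) ↔ ∀ a, minimalPeriod τ a ∈ A := by
  have hval := (Perm.semiconj_val_glueAlong (ρ := blockRotation π l) τ).minimalPeriod_apply_eq
    Subtype.val_injective
  refine ⟨fun h a => hval a ▸ h a, fun h a => ?_⟩
  by_cases ha : a ∈ Set.range c.emb
  · obtain ⟨p, rfl⟩ := ha
    rwa [perm, (Perm.semiconj_glueAlong τ).minimalPeriod_apply_eq c.emb.injective,
      minimalPeriod_blockRotation]
  · exact hval ⟨a, ha⟩ ▸ h _

theorem perm_injective :
    Injective fun s : Σ c : hπ.CycleCode l ι, Perm {a // a ∉ Set.range c.emb} =>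
      s.1.perm s.2 := by
  rintro ⟨⟨P, F, hF⟩, τ⟩ ⟨⟨P', F', hF'⟩, τ'⟩ h
  simp only at h
  obtain rfl : F = F' := DFunLike.ext _ _ fun ⟨V, i⟩ =>
    (emb_eq_iterate τ V i).trans (h ▸ (emb_eq_iterate τ' V i).symm)
  obtain rfl : P = P' := Placement.toEmb_injective <|
    DFunLike.ext _ _ fun x => F.injective ((hF x).trans (hF' x).symm)
  obtain rfl := Perm.glueAlong_injective h
  rfl

end CycleCode

section FromPerm

variable {α β : Type*} [Finite α] [Fintype β] {π : Finset (Finset β)}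
  (hπ : IsBlockPartition π) {l : ℕ} [NeZero l] (ι : β ↪ α) {σ : Perm α}

theorem exists_iterate_base_eq (hσ : PlacesOnCycles ι l π σ) {x : β} {V : π}
    (hx : hπ.partOf x = V) :
    ∃ i : Fin l, (⇑σ)^[i] (ι (hπ.base V)) = ι x := by
  have hcyc := (cyclePartition_eq_iff ι hπ).mp hσ.2
  exact ((hcyc _ _).mpr ((hπ.partOf_base V).trans hx.symm)).exists_fin_iterate_eq (hσ.1 _)

noncomputable def orbitEmb (hσ : PlacesOnCycles ι l π σ) : π × Fin l ↪ α where
  toFun p := (⇑σ)^[p.2] (ι (hπ.base p.1))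
  inj' := by
    rintro ⟨V, i⟩ ⟨W, j⟩ (h : (⇑σ)^[i] (ι (hπ.base V)) = (⇑σ)^[j] (ι (hπ.base W)))
    have hcyc := (cyclePartition_eq_iff ι hπ).mp hσ.2
    have hiter (m : ℕ) (a : α) : σ.SameCycle a ((⇑σ)^[m] a) :=
      Perm.sameCycle_iff_exists_iterate.mpr ⟨m, rfl⟩
    have hVW : hπ.partOf (hπ.base V) = hπ.partOf (hπ.base W) :=
      (hcyc _ _).mp (((h ▸ hiter i _) : σ.SameCycle _ _).trans (hiter j _).symm)
    rw [hπ.partOf_base, hπ.partOf_base] at hVW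
    subst hVW
    have hl := hσ.1 (hπ.base V)
    simp only [Prod.mk.injEq, true_and]
    exact Fin.ext <| (iterate_eq_iterate_iff_of_lt_minimalPeriod (hl ▸ i.2) (hl ▸ j.2)).mp h

open Fin.NatCast in
theorem semiconj_orbitEmb (hσ : PlacesOnCycles ι l π σ) :
    Semiconj (orbitEmb hπ ι hσ) (blockRotation π l) σ := by
  rintro ⟨V, i⟩
  have hi : i + 1 = ((i + 1 : ℕ) : Fin l) := by simp
  change (⇑σ)^[(i + 1 : Fin l)] _ = σ ((⇑σ)^[i] _)
  rw [hi, iterate_fin_val_natCast (hσ.1 _), iterate_succ_apply']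
  rfl

noncomputable def cyclePos (hσ : PlacesOnCycles ι l π σ) {x : β} {V : π}
    (hx : hπ.partOf x = V) : Fin l :=
  (exists_iterate_base_eq hπ ι hσ hx).choose

theorem iterate_cyclePos (hσ : PlacesOnCycles ι l π σ) {x : β} {V : π}
    (hx : hπ.partOf x = V) :
    (⇑σ)^[cyclePos hπ ι hσ hx] (ι (hπ.base V)) = ι x :=
  (exists_iterate_base_eq hπ ι hσ hx).choose_spec

theorem cyclePos_base (hσ : PlacesOnCycles ι l π σ) (V : π) :
    cyclePos hπ ι hσ (hπ.partOf_base V) = 0 := by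
  have hl := hσ.1 (hπ.base V)
  refine Fin.ext ((iterate_eq_iterate_iff_of_lt_minimalPeriod (n := 0) ?_ ?_).mp
    (iterate_cyclePos hπ ι hσ (hπ.partOf_base V)))
  · exact hl ▸ (cyclePos hπ ι hσ _).2
  · exact hl ▸ NeZero.pos l

noncomputable def placementOf (hσ : PlacesOnCycles ι l π σ) : hπ.Placement l := fun V =>
  ⟨⟨fun x => cyclePos hπ ι hσ x.2, fun x y h => Subtype.ext <| ι.injective <|
      (iterate_cyclePos hπ ι hσ x.2).symm.trans <|
        (congrArg (fun i : Fin l => (⇑σ)^[i] (ι (hπ.base V))) h).trans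
          (iterate_cyclePos hπ ι hσ y.2)⟩,
    cyclePos_base hπ ι hσ V⟩

theorem exists_perm_eq (hσ : PlacesOnCycles ι l π σ) :
    ∃ (c : hπ.CycleCode l ι) (τ : Perm {a // a ∉ Set.range c.emb}), c.perm τ = σ :=
  ⟨⟨placementOf hπ ι hσ, orbitEmb hπ ι hσ, fun _ => iterate_cyclePos hπ ι hσ rfl⟩,
    _, Perm.glueAlong_subtypePerm (semiconj_orbitEmb hπ ι hσ)⟩

end FromPerm

theorem card_placesOnCycles {α β : Type*} [Fintype α] [Fintype β] {π : Finset (Finset β)}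
    (hπ : IsBlockPartition π) {l : ℕ} [NeZero l] (ι : β ↪ α) {A : Set ℕ}
    (hlA : l ∈ A) :
    Nat.card {σ : Perm α // (∀ a, minimalPeriod σ a ∈ A) ∧ PlacesOnCycles ι l π σ} =
      (∏ V ∈ π, (l - 1).descFactorial (V.card - 1)) *
        (Nat.card α - Nat.card β).descFactorial (l * π.card - Nat.card β) *
        permCount A (Nat.card α - l * π.card) := by
  let f (s : Σ c : hπ.CycleCode l ι,
      {τ : Perm {a // a ∉ Set.range c.emb} // ∀ a, minimalPeriod τ a ∈ A}) :
      {σ : Perm α // (∀ a, minimalPeriod σ a ∈ A) ∧ PlacesOnCycles ι l π σ} :=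
    ⟨s.1.perm s.2.1, (CycleCode.forall_minimalPeriod_perm_mem_iff _ hlA).mpr s.2.2,
      CycleCode.placesOnCycles_perm _⟩
  have hf : Bijective f := by
    refine ⟨fun ⟨c, τ, _⟩ ⟨c', τ', _⟩ h => ?_, fun ⟨σ, hA, hσ⟩ => ?_⟩
    · cases CycleCode.perm_injective (a₁ := ⟨c, τ⟩) (a₂ := ⟨c', τ'⟩)
        (congrArg Subtype.val h)
      rfl
    · obtain ⟨c, τ, rfl⟩ := exists_perm_eq hπ ι hσ
      exact ⟨⟨c, τ, (CycleCode.forall_minimalPeriod_perm_mem_iff τ hlA).mp hA⟩, rfl⟩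
  rw [← Nat.card_congr (Equiv.ofBijective f hf), Nat.card_sigma]
  simp only [card_perm_minimalPeriod_mem, Embedding.card_compl_range, Nat.card_prod,
    Nat.card_fin, Nat.card_eq_finsetCard]
  rw [sum_const, card_univ, ← Nat.card_eq_fintype_card, card_cycleCode, smul_eq_mul, mul_comm _ l]

theorem prod_descFactorial_mul_div_eq {K : Type*} [Field K] [CharZero K] {n j l : ℕ}
    {π : Finset (Finset (Fin j))} (hπ : IsBlockPartition π) (hl : 0 < l) (hnj : l * j ≤ n)
    (p p' : K) :
    (∏ V ∈ π, ((l - 1).descFactorial (V.card - 1) : K)) *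
        (n - j).descFactorial (l * π.card - j) * p' / p =
      1 / n.descFactorial j * (p' / (n - l * π.card).factorial / (p / n.factorial)) *
        ∏ V ∈ π,
          (if V.card ≤ l then ((l - 1).factorial : K) / (l - V.card).factorial else 0) := by
  rw [prod_congr rfl fun V hV => Nat.cast_descFactorial_pred_eq_ite hl (hπ.1 V hV).card_pos]
  rcases eq_or_ne p 0 with rfl | hp
  · simp
  by_cases hc : ∀ V ∈ π, V.card ≤ l
  · have hjk : j ≤ l * π.card := by
      have := Finset.sum_le_card_nsmul π Finset.card l hc
      rw [hπ.sum_card, Nat.card_fin, smul_eq_mul] at this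
      linarith
    have hkn : l * π.card ≤ n :=
      (Nat.mul_le_mul_left l (hπ.card_le.trans (Nat.card_fin j).le)).trans hnj
    rw [Nat.cast_descFactorial_eq_div (by omega), Nat.cast_descFactorial_eq_div (by omega),
      show n - j - (l * π.card - j) = n - l * π.card by omega]
    have hfact : (n.factorial : K) ≠ 0 := Nat.cast_ne_zero.mpr (Nat.factorial_ne_zero n)
    field_simp
  · simp only [not_forall, not_le] at hc
    obtain ⟨V, hV, hlt⟩ := hc
    rw [prod_eq_zero hV (if_neg hlt.not_ge)]
    simp

end IsBlockPartition

theorem stmt_17_general (A : Finset ℕ) (hApos : ∀ a ∈ A, 0 < a)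
    (l : ℕ) (hl : l ∈ A) (j : ℕ)
    (n : ℕ) (hnj : l * j ≤ n) :
    (Nat.card {s : Equiv.Perm (Fin n) //
        (∀ x, Function.minimalPeriod ⇑s x ∈ (A : Set ℕ)) ∧
        ∀ m : Fin n, (m : ℕ) < j → Function.minimalPeriod ⇑s m = l} : ℝ)
      / (permCount ↑A n : ℝ)
    = ∑ π ∈ Finset.univ.filter (fun π : Finset (Finset (Fin j)) =>
        (∀ V ∈ π, V.Nonempty) ∧ ∀ x : Fin j, ∃! V, V ∈ π ∧ x ∈ V),
        (1 / (n.descFactorial j : ℝ)) *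
          (((permCount ↑A (n - l * π.card) : ℝ) / (n - l * π.card).factorial) /
            ((permCount ↑A n : ℝ) / n.factorial)) *
          ∏ V ∈ π,
            (if V.card ≤ l then ((l - 1).factorial : ℝ) / ((l - V.card).factorial : ℝ)
             else 0) := by
  have hl0 : 0 < l := hApos l hl
  have : NeZero l := ⟨hl0.ne'⟩
  have hjn : j ≤ n := (Nat.le_mul_of_pos_left j hl0).trans hnj
  have hmarked : ∀ s : Perm (Fin n), (∀ m : Fin n, (m : ℕ) < j → minimalPeriod s m = l) ↔
      ∀ b, minimalPeriod s (Fin.castLEEmb hjn b) = l :=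
    fun s => ⟨fun h b => h _ b.2, fun h m hm => h ⟨m, hm⟩⟩
  simp only [hmarked]
  rw [card_eq_sum_card_placesOnCycles, Nat.cast_sum, sum_div]
  refine sum_congr (filter_congr fun π _ => Iff.rfl) fun π hπ => ?_
  have hπ : IsBlockPartition π := (mem_filter.mp hπ).2
  rw [hπ.card_placesOnCycles _ (by simpa using hl), Nat.card_fin, Nat.card_fin]
  push_cast
  exact hπ.prod_descFactorial_mul_div_eq hl0 hnj _ _

theorem stmt_17 (A : Finset ℕ) (hApos : ∀ a ∈ A, 0 < a) (hA : A.Nonempty)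
    (d : ℕ) (hd : d = A.max' hA) (l : ℕ) (hl : l ∈ A) (j : ℕ) (hj : 0 < j)
    (n : ℕ) (hn : permCount ↑A n ≠ 0) (hnj : l * j ≤ n) :
    (Nat.card {s : Equiv.Perm (Fin n) //
        (∀ x, Function.minimalPeriod ⇑s x ∈ (A : Set ℕ)) ∧
        ∀ m : Fin n, (m : ℕ) < j → Function.minimalPeriod ⇑s m = l} : ℝ)
      / (permCount ↑A n : ℝ)
    = ∑ π ∈ Finset.univ.filter (fun π : Finset (Finset (Fin j)) =>
        (∀ V ∈ π, V.Nonempty) ∧ ∀ x : Fin j, ∃! V, V ∈ π ∧ x ∈ V),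
        (1 / (n.descFactorial j : ℝ)) *
          (((permCount ↑A (n - l * π.card) : ℝ) / (n - l * π.card).factorial) /
            ((permCount ↑A n : ℝ) / n.factorial)) *
          ∏ V ∈ π,
            (if V.card ≤ l then ((l - 1).factorial : ℝ) / ((l - V.card).factorial : ℝ)
             else 0) :=
  stmt_17_general A hApos l hl j n hnj
end
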